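/- arXiv:1905.12018 — 6 statements merged into one kernel-verified Lean document; each statement's English description precedes it below -/
import Mathlib

section
/- If G is a finite group with a proper normal subgroup N such that gcd(|N|, [G:N]) = 1 and G/N ≅ Q_{20} (the quaternion group of order 20) with N ≅ C_3, and G also has a quotient isomorphic to Q_{12}, then G ≅ Q_{60}. -/
/-!
From `|N| = 3` and `[G : N] = 20` we get `|G| = 60`, and the kernels of `G → Q₂₀` and `G → Q₁₂`
(of orders 3 and 5) meet trivially, so `G` embeds in `Q₁₂ × Q₂₀`. Both factors have
abelianization `C₄`, and the two induced characters `G → C₄` have the same kernel, namely the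
elements of order dividing 15. Hence they agree up to an automorphism of `C₄`, which is absorbed
by an automorphism of `Q₂₀`. Then `G` lands in the fibre product `Q₁₂ ×_{C₄} Q₂₀`, which has
order 60, and `Q₆₀` embeds in the same fibre product by reducing indices.
-/

abbrev C₄ := Multiplicative (ZMod 4)

section general

variable {G A B : Type*} [Group G] [Group A] [Group B]

theorem MonoidHom.card_ker_mul_card_of_surjective (f : G →* A) (hf : Function.Surjective f) :
    Nat.card f.ker * Nat.card A = Nat.card G := by
  rw [← f.ker.card_mul_index, Subgroup.index_ker, MonoidHom.range_eq_top.2 hf, Subgroup.card_top]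

theorem MonoidHom.card_ker_of_surjective [Finite G] (f : G →* A) (hf : Function.Surjective f) :
    Nat.card f.ker = Nat.card G / Nat.card A := by
  have : Finite A := Finite.of_surjective f hf
  exact Nat.eq_div_of_mul_eq_left Nat.card_pos.ne' (f.card_ker_mul_card_of_surjective hf)

theorem MonoidHom.injective_prod_of_coprime_card_ker (f : G →* A) (g : G →* B)
    (h : (Nat.card f.ker).Coprime (Nat.card g.ker)) : Function.Injective (f.prod g) := by
  rw [← MonoidHom.ker_eq_bot_iff, ← Subgroup.card_eq_one, ← Nat.dvd_one, ← h, MonoidHom.ker_prod]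
  exact Nat.dvd_gcd (Subgroup.card_dvd_of_le inf_le_left) (Subgroup.card_dvd_of_le inf_le_right)

theorem MonoidHom.pow_card_ker_eq_one_iff [Finite G] [Finite A] (f : G →* A)
    (h : (Nat.card f.ker).Coprime (Nat.card A)) (g : G) :
    g ^ Nat.card f.ker = 1 ↔ f g = 1 := by
  refine ⟨fun hg => ?_, fun hg => ?_⟩
  · exact (pow_eq_one_iff_of_coprime h).1 ⟨by rw [← map_pow, hg, map_one], pow_card_eq_one'⟩
  · simpa using congrArg Subtype.val (pow_card_eq_one' (G := f.ker) (x := ⟨g, hg⟩))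

theorem MonoidHom.ker_eq_ker_of_card_ker_eq [Finite G] [Finite A] (f₁ f₂ : G →* A)
    (h : Nat.card f₁.ker = Nat.card f₂.ker) (hcop : (Nat.card f₁.ker).Coprime (Nat.card A)) :
    f₁.ker = f₂.ker := by
  ext g
  rw [MonoidHom.mem_ker, MonoidHom.mem_ker, ← f₁.pow_card_ker_eq_one_iff hcop,
    ← f₂.pow_card_ker_eq_one_iff (h ▸ hcop), h]

theorem MonoidHom.range_eq_of_le_of_card_le {P : Type*} [Group P] (φ : G →* P)
    (hφ : Function.Injective φ) {K : Subgroup P} [Finite K] (hle : φ.range ≤ K)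
    (hcard : Nat.card K ≤ Nat.card G) : φ.range = K :=
  Subgroup.eq_of_le_of_card_ge hle <| by
    rwa [← Nat.card_congr (MonoidHom.ofInjective hφ).toEquiv]

end general

namespace C₄

theorem natCard : Nat.card C₄ = 4 := by
  rw [Nat.card_eq_fintype_card, Fintype.card_multiplicative, ZMod.card]

theorem pow_val (m : C₄) : Multiplicative.ofAdd (1 : ZMod 4) ^ m.toAdd.val = m := by
  revert m; decide

theorem eq_gen_or_eq_inv_gen_of_sq_ne_one (c : C₄) (hc : c ^ 2 ≠ 1) :
    c = Multiplicative.ofAdd 1 ∨ c = (Multiplicative.ofAdd 1)⁻¹ := by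
  revert c; decide

theorem eq_or_eq_inv_of_ker_eq {G : Type*} [Group G] (f₁ f₂ : G →* C₄)
    (hf₁ : Function.Surjective f₁) (h : f₁.ker = f₂.ker) : f₂ = f₁ ∨ f₂ = f₁⁻¹ := by
  obtain ⟨g₀, hg₀⟩ := hf₁ (Multiplicative.ofAdd 1)
  have hf₂ : ∀ g, f₂ g = f₂ g₀ ^ (f₁ g).toAdd.val := by
    intro g
    have : g * (g₀ ^ (f₁ g).toAdd.val)⁻¹ ∈ f₂.ker := by
      rw [← h, MonoidHom.mem_ker, map_mul, map_inv, map_pow, hg₀, pow_val, mul_inv_cancel]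
    rwa [MonoidHom.mem_ker, map_mul, map_inv, mul_inv_eq_one, map_pow] at this
  have hsq : f₂ g₀ ^ 2 ≠ 1 := by
    rw [← map_pow, Ne, ← MonoidHom.mem_ker, ← h, MonoidHom.mem_ker, map_pow, hg₀]
    decide
  rcases eq_gen_or_eq_inv_gen_of_sq_ne_one _ hsq with hc | hc
  · left; ext g; rw [hf₂, hc, pow_val]
  · right; ext g; rw [hf₂, hc, inv_pow, pow_val]; rfl

end C₄

namespace QuaternionGroup

theorem natCard (n : ℕ) [NeZero n] : Nat.card (QuaternionGroup n) = 4 * n := by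
  rw [Nat.card_eq_fintype_card, QuaternionGroup.card]

/-- `a ↦ 2`, `xa 0 ↦ 1`; a homomorphism exactly when `n` is odd, where it realises
the abelianization `Q_{4n} → C₄`. -/
def toC₄ {n : ℕ} : QuaternionGroup n → C₄
  | .a i => Multiplicative.ofAdd (2 * (i.val : ZMod 4))
  | .xa i => Multiplicative.ofAdd (2 * (i.val : ZMod 4) + 1)

def charQ12 : QuaternionGroup 3 →* C₄ := MonoidHom.mk' toC₄ (by decide)

def charQ20 : QuaternionGroup 5 →* C₄ := MonoidHom.mk' toC₄ (by decide)

theorem charQ12_surjective : Function.Surjective charQ12 := by decide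

theorem charQ20_surjective : Function.Surjective charQ20 := by decide

/-- Reduction of indices modulo `2m`; a homomorphism when `m ∣ n` with `n / m` odd. -/
def reduce {n m : ℕ} : QuaternionGroup n → QuaternionGroup m
  | .a i => .a (i.val : ZMod (2 * m))
  | .xa i => .xa (i.val : ZMod (2 * m))

set_option maxRecDepth 10000 in
def Q60ToQ12 : QuaternionGroup 15 →* QuaternionGroup 3 := MonoidHom.mk' reduce (by decide)

set_option maxRecDepth 10000 in
def Q60ToQ20 : QuaternionGroup 15 →* QuaternionGroup 5 := MonoidHom.mk' reduce (by decide)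

theorem injective_Q60ToQ12_prod_Q60ToQ20 : Function.Injective (Q60ToQ12.prod Q60ToQ20) := by
  rw [injective_iff_map_eq_one]
  intro x hx
  rw [MonoidHom.prod_apply, Prod.mk_eq_one] at hx
  revert x
  decide

theorem charQ12_comp_Q60ToQ12 : charQ12.comp Q60ToQ12 = charQ20.comp Q60ToQ20 := by
  ext x; revert x; decide

def flipQ20 : QuaternionGroup 5 →* QuaternionGroup 5 :=
  MonoidHom.mk' (fun | .a i => .a i | .xa i => .xa (i + 1)) (by decide)

theorem flipQ20_surjective : Function.Surjective flipQ20 := by decide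

theorem charQ20_comp_flipQ20 : charQ20.comp flipQ20 = charQ20⁻¹ := by
  ext x; revert x; decide

def fiberQ12Q20 : Subgroup (QuaternionGroup 3 × QuaternionGroup 5) :=
  (charQ12.comp (MonoidHom.fst _ _)).eqLocus (charQ20.comp (MonoidHom.snd _ _))

theorem card_fiberQ12Q20 : Nat.card fiberQ12Q20 = 60 := by
  let δ := charQ20.comp (MonoidHom.snd _ _) / charQ12.comp (MonoidHom.fst _ _)
  have hker : δ.ker = fiberQ12Q20 := by
    ext p
    rw [MonoidHom.mem_ker, MonoidHom.div_apply, div_eq_one, eq_comm]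
    rfl
  have hδ : Function.Surjective δ := fun c => by
    obtain ⟨q, hq⟩ := charQ20_surjective c
    exact ⟨(1, q), by simp [δ, hq]⟩
  have := δ.card_ker_mul_card_of_surjective hδ
  rw [hker, Nat.card_prod, natCard, natCard, C₄.natCard] at this
  omega

theorem exists_surjective_charQ20_comp_eq {G : Type*} [Group G] [Finite G]
    (hG : Nat.card G = 60) (f : G →* QuaternionGroup 3) (hf : Function.Surjective f)
    (π : G →* QuaternionGroup 5) (hπ : Function.Surjective π) :
    ∃ π' : G →* QuaternionGroup 5, Function.Surjective π' ∧
      charQ20.comp π' = charQ12.comp f := by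
  have hf₁ := charQ12_surjective.comp hf
  have hk₁ : Nat.card (charQ12.comp f).ker = 15 := by
    rw [(charQ12.comp f).card_ker_of_surjective hf₁, hG, C₄.natCard]
  have hk₂ : Nat.card (charQ20.comp π).ker = 15 := by
    rw [(charQ20.comp π).card_ker_of_surjective (charQ20_surjective.comp hπ), hG, C₄.natCard]
  have hker := MonoidHom.ker_eq_ker_of_card_ker_eq (charQ12.comp f) (charQ20.comp π)
    (hk₁.trans hk₂.symm) (by rw [hk₁, C₄.natCard]; decide)
  rcases C₄.eq_or_eq_inv_of_ker_eq _ _ hf₁ hker with h | h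
  · exact ⟨π, hπ, h⟩
  · refine ⟨flipQ20.comp π, flipQ20_surjective.comp hπ, ?_⟩
    rw [← MonoidHom.comp_assoc, charQ20_comp_flipQ20, MonoidHom.inv_comp, h, inv_inv]

theorem nonempty_mulEquiv_Q60 {G : Type*} [Group G] [Finite G]
    (hG : Nat.card G = 60) (f : G →* QuaternionGroup 3) (hf : Function.Surjective f)
    (π : G →* QuaternionGroup 5) (hπ : Function.Surjective π) :
    Nonempty (G ≃* QuaternionGroup 15) := by
  obtain ⟨π', hπ', hcompat⟩ := exists_surjective_charQ20_comp_eq hG f hf π hπ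
  have hk₁ : Nat.card f.ker = 5 := by rw [f.card_ker_of_surjective hf, hG, natCard]
  have hk₂ : Nat.card π'.ker = 3 := by rw [π'.card_ker_of_surjective hπ', hG, natCard]
  have hφ : Function.Injective (f.prod π') :=
    f.injective_prod_of_coprime_card_ker π' (by rw [hk₁, hk₂]; decide)
  have hrφ := (f.prod π').range_eq_of_le_of_card_le hφ (K := fiberQ12Q20)
    (by rintro _ ⟨g, rfl⟩; exact (DFunLike.congr_fun hcompat g).symm)
    (by rw [card_fiberQ12Q20, hG])
  have hrψ := (Q60ToQ12.prod Q60ToQ20).range_eq_of_le_of_card_le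
    injective_Q60ToQ12_prod_Q60ToQ20 (K := fiberQ12Q20)
    (by rintro _ ⟨x, rfl⟩; exact DFunLike.congr_fun charQ12_comp_Q60ToQ12 x)
    (by rw [card_fiberQ12Q20, natCard])
  exact ⟨(MonoidHom.ofInjective hφ).trans ((MulEquiv.subgroupCongr (hrφ.trans hrψ.symm)).trans
    (MonoidHom.ofInjective injective_Q60ToQ12_prod_Q60ToQ20).symm)⟩

end QuaternionGroup

theorem stmt_3_general (G : Type*) [Group G] [Finite G] (N : Subgroup G) [N.Normal]
    (hQ20 : Nonempty ((G ⧸ N) ≃* QuaternionGroup 5))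
    (hC3 : Nonempty (N ≃* Multiplicative (ZMod 3)))
    (hQ12 : ∃ f : G →* QuaternionGroup 3, Function.Surjective f) :
    Nonempty (G ≃* QuaternionGroup 15) := by
  obtain ⟨e₂₀⟩ := hQ20
  obtain ⟨e₃⟩ := hC3
  obtain ⟨f, hf⟩ := hQ12
  have hG : Nat.card G = 60 := by
    rw [← N.card_mul_index, Nat.card_congr e₃.toEquiv, Nat.card_congr Multiplicative.toAdd,
      Nat.card_zmod, Subgroup.index_eq_card, Nat.card_congr e₂₀.toEquiv, QuaternionGroup.natCard]
  exact QuaternionGroup.nonempty_mulEquiv_Q60 hG f hf (e₂₀.toMonoidHom.comp (QuotientGroup.mk' N))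
    (e₂₀.surjective.comp (QuotientGroup.mk'_surjective N))

/-- If `G` is a finite group with a proper normal subgroup `N` such that
`gcd(|N|, [G:N]) = 1`, `G/N ≅ Q_20` (= `QuaternionGroup 5`), `N ≅ C_3`, and `G` also has a
quotient isomorphic to `Q_12` (= `QuaternionGroup 3`), then `G ≅ Q_60` (= `QuaternionGroup 15`). -/
theorem stmt_3 (G : Type*) [Group G] [Finite G] (N : Subgroup G) [N.Normal]
    (hprop : N ≠ ⊤)
    (hcop : Nat.Coprime (Nat.card N) N.index)
    (hQ20 : Nonempty ((G ⧸ N) ≃* QuaternionGroup 5))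
    (hC3 : Nonempty (N ≃* Multiplicative (ZMod 3)))
    (hQ12 : ∃ f : G →* QuaternionGroup 3, Function.Surjective f) :
    Nonempty (G ≃* QuaternionGroup 15) :=
  stmt_3_general G N hQ20 hC3 hQ12
end

section
/- If G is a finite group whose Sylow p-subgroups are cyclic for all odd primes p and whose Sylow 2-subgroup is cyclic or generalized quaternion, then G has no subgroup isomorphic to C_p × C_p for any prime p. -/
/-!
A subgroup `H ≅ C_p × C_p` of order `p²` lies in a Sylow `p`-subgroup `P`. Since `C_p × C_p` is
not cyclic, neither is `P`, so `p = 2` and `P` is generalized quaternion. But a generalized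
quaternion group has a unique involution, whereas the Klein four-group has three.
-/

lemma not_isCyclic_zmod_prod (p : ℕ) [Fact p.Prime] :
    ¬ IsCyclic (Multiplicative (ZMod p) × Multiplicative (ZMod p)) := fun h => by
  have := coprime_card_of_isCyclic_prod (Multiplicative (ZMod p)) (Multiplicative (ZMod p))
  simp only [Nat.card_eq_fintype_card, Fintype.card_multiplicative, ZMod.card,
    Nat.coprime_self] at this
  exact (Fact.out : p.Prime).one_lt.ne' this

namespace QuaternionGroup

lemma eq_one_or_eq_a_of_sq_eq_one {n : ℕ} [NeZero n] {g : QuaternionGroup n} (hg : g ^ 2 = 1) :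
    g = 1 ∨ g = a n := by
  cases g with
  | a i =>
    rw [sq, a_mul_a, one_def, a.injEq, ← ZMod.natCast_zmod_val i] at hg
    obtain ⟨k, hk⟩ : 2 * n ∣ i.val + i.val :=
      (ZMod.natCast_eq_zero_iff _ _).mp (by exact_mod_cast hg)
    have hlt := ZMod.val_lt i
    rw [one_def, ← ZMod.natCast_zmod_val i]
    obtain h0 | h1 : i.val = 0 ∨ i.val = n := by
      rcases k with _ | _ | k <;> [omega; omega; nlinarith]
    · simp [h0]
    · simp [h1]
  | xa i =>
    rw [xa_sq, one_def, a.injEq, ZMod.natCast_eq_zero_iff] at hg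
    have hn := NeZero.pos n
    have := Nat.le_of_dvd hn hg
    omega

end QuaternionGroup

lemma not_injective_klein_of_sq_eq_one {Q : Type*} [Group Q] (z : Q)
    (hz : ∀ g : Q, g ^ 2 = 1 → g = 1 ∨ g = z)
    (φ : Multiplicative (ZMod 2) × Multiplicative (ZMod 2) →* Q) :
    ¬ Function.Injective φ := by
  intro hφ
  have hφz : ∀ w, w ≠ 1 → φ w = z := fun w hw =>
    (hz (φ w) (by rw [← map_pow, show w ^ 2 = 1 by revert w; decide, map_one])).resolve_left
      fun h => hw (hφ (h.trans (map_one φ).symm))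
  have := hφ ((hφz (Multiplicative.ofAdd 1, 1) (by decide)).trans
    (hφz (1, Multiplicative.ofAdd 1) (by decide)).symm)
  exact absurd this (by decide)

/-- If `G` is a finite group whose Sylow `p`-subgroups are cyclic for all odd primes `p`,
and whose Sylow 2-subgroups are cyclic or generalized quaternion, then `G` has no subgroup
isomorphic to `C_p × C_p` for any prime `p`. -/
theorem stmt_6 (G : Type*) [Group G] [Finite G]
    (hodd : ∀ p : ℕ, p.Prime → Odd p → ∀ P : Sylow p G, IsCyclic P)
    (h2 : ∀ P : Sylow 2 G, IsCyclic P ∨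
      ∃ n : ℕ, 3 ≤ n ∧ Nonempty ((P : Subgroup G) ≃* QuaternionGroup (2 ^ (n - 2)))) :
    ∀ p : ℕ, p.Prime → ∀ H : Subgroup G,
      ¬ Nonempty (H ≃* Multiplicative (ZMod p) × Multiplicative (ZMod p)) := by
  rintro p hp H ⟨e⟩
  have : Fact p.Prime := ⟨hp⟩
  have hcard : Nat.card H = p ^ 2 := by simp [Nat.card_congr e.toEquiv, sq]
  obtain ⟨P, hHP⟩ := (IsPGroup.of_card hcard).exists_le_sylow
  have hP : ¬ IsCyclic P := fun _ =>
    not_isCyclic_zmod_prod p (e.isCyclic.mp (Subgroup.isCyclic_of_le hHP))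
  rcases hp.eq_two_or_odd' with rfl | hp_odd
  · rcases h2 P with hc | ⟨n, -, ⟨f⟩⟩
    · exact hP hc
    · exact not_injective_klein_of_sq_eq_one _
        (fun _ => QuaternionGroup.eq_one_or_eq_a_of_sq_eq_one)
        (f.toMonoidHom.comp ((Subgroup.inclusion hHP).comp e.symm.toMonoidHom))
        (f.injective.comp ((Subgroup.inclusion_injective hHP).comp e.symm.injective))
  · exact hP (hodd p hp hp_odd P)
end

section
/- Let R be a ring, G a finite group, ε: Z[G] → Z the augmentation map, I = ker(ε) the augmentation ideal, and f: Z → (Z[G])^n an injective homomorphism of Z[G]-modules (with Z the trivial module) such that coker(f) is torsion-free as an abelian group. Then coker(f) is isomorphic to I* ⊕ (Z[G])^{n-1}, where I* = Hom_{Z[G]}(I, Z[G]). -/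
/-- The augmentation map `ℤ[G] → ℤ`. -/
noncomputable def augmentation (G : Type*) [Group G] :
    MonoidAlgebra ℤ G →ₐ[ℤ] ℤ :=
  MonoidAlgebra.lift ℤ ℤ G 1

/-- The augmentation ideal `I = ker(ε : ℤ[G] → ℤ)`. -/
noncomputable def augmentationIdeal (G : Type*) [Group G] :
    Ideal (MonoidAlgebra ℤ G) :=
  RingHom.ker (augmentation G).toRingHom

/-- The antipode `ℤ[G] → ℤ[G]ᵐᵒᵖ`, `g ↦ g⁻¹`. -/
noncomputable def antipode (G : Type*) [Group G] :
    MonoidAlgebra ℤ G →+* (MonoidAlgebra ℤ G)ᵐᵒᵖ :=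
  (MonoidAlgebra.lift ℤ ((MonoidAlgebra ℤ G)ᵐᵒᵖ) G
    { toFun := fun g => MulOpposite.op (MonoidAlgebra.of ℤ G g⁻¹)
      map_one' := by simp [MonoidAlgebra.one_def]
      map_mul' := fun g h => by
        show MulOpposite.op (MonoidAlgebra.of ℤ G (g * h)⁻¹) = _
        rw [mul_inv_rev, map_mul, MulOpposite.op_mul] }).toRingHom

/-- The `ℤ[G]`-dual `M* = Hom_{ℤ[G]}(M, ℤ[G])` of a `ℤ[G]`-module `M`. -/
def ZGDual (G : Type*) [Group G] (M : Type*) [AddCommGroup M]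
    [Module (MonoidAlgebra ℤ G) M] : Type _ :=
  M →ₗ[MonoidAlgebra ℤ G] MonoidAlgebra ℤ G

noncomputable instance (G : Type*) [Group G] (M : Type*) [AddCommGroup M]
    [Module (MonoidAlgebra ℤ G) M] : AddCommGroup (ZGDual G M) :=
  inferInstanceAs (AddCommGroup (M →ₗ[MonoidAlgebra ℤ G] MonoidAlgebra ℤ G))

/-- The left `ℤ[G]`-module structure on `M*`, induced via the antipode from the natural
right module structure. -/
noncomputable instance (G : Type*) [Group G] (M : Type*) [AddCommGroup M]
    [Module (MonoidAlgebra ℤ G) M] : Module (MonoidAlgebra ℤ G) (ZGDual G M) :=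
  Module.compHom (M →ₗ[MonoidAlgebra ℤ G] MonoidAlgebra ℤ G) (antipode G)

/-!
Invariance forces `v = a • N` for an integer vector `a`, where `N = ∑ g` is the norm element.
Injectivity gives `a ≠ 0`, and torsion-freeness of the cokernel forces `a` to be primitive, hence
unimodular. A unimodular integer vector is the first vector of a `ℤ`-basis, so an integral change
of basis moves `v` to `(N, 0, …, 0)` and the cokernel becomes `ℤ[G]/(N) ⊕ ℤ[G]^{n-1}`. Finally
`w ↦ (x ↦ x · w⁻)` (with `w⁻` the antipode of `w`) identifies `ℤ[G]/(N)` with `I*`: its kernel is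
`ℤ • N`, the `G`-invariants of `ℤ[G]`, and it is onto because `H¹(G, ℤ[G]) = 0` makes every
`ℤ[G]`-linear map `I → ℤ[G]` a right multiplication.
-/

open Module Matrix
open MonoidAlgebra (single coeff_sum smul_single' single_mul_single intCast_def coeff_add
  coeff_sub coeff_single_mul_apply)

theorem Int.span_range_eq_top_of_primitive {ι : Type*} {a : ι → ℤ} (ha : a ≠ 0)
    (h : ∀ d : ℤ, d ≠ 0 → ∀ b : ι → ℤ, a = d • b → ∃ c : ℤ, b = c • a) :
    Ideal.span (Set.range a) = ⊤ := by
  obtain ⟨d, hd⟩ := (IsPrincipalIdealRing.principal (Ideal.span (Set.range a))).principal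
  have hdvd (i : ι) : d ∣ a i := by
    rw [← Ideal.mem_span_singleton, ← Ideal.submodule_span_eq, ← hd]
    exact Ideal.subset_span ⟨i, rfl⟩
  choose b hb using hdvd
  have hd0 : d ≠ 0 := by
    rintro rfl
    exact ha (funext fun i => by simp [hb i])
  obtain ⟨c, hc⟩ := h d hd0 b (funext hb)
  obtain ⟨i, hi⟩ := Function.ne_iff.1 ha
  have hdc : d * c = 1 := by
    refine mul_right_cancel₀ hi ?_
    have := hb i
    rw [hc] at this
    simpa [mul_assoc] using this.symm
  rw [hd, Ideal.submodule_span_eq, Ideal.span_singleton_eq_top]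
  exact .of_mul_eq_one c hdc

theorem exists_finBasis_zero_eq_of_apply_eq_one {R M : Type*} [CommRing R] [IsDomain R]
    [IsPrincipalIdealRing R] [AddCommGroup M] [Module R M] [Module.Free R M] [Module.Finite R M]
    {φ : M →ₗ[R] R} {y : M} (hy : φ y = 1) :
    ∃ (k : ℕ) (B : Basis (Fin (k + 1)) R M), B 0 = y := by
  obtain ⟨k, ⟨b⟩⟩ := Submodule.nonempty_basis_of_pid (Free.chooseBasis R M) (LinearMap.ker φ)
  refine ⟨k, Basis.mkFinCons y b (fun c x hx hc => ?_) (fun z => ⟨-φ z, ?_⟩), by simp⟩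
  · simpa [LinearMap.mem_ker.1 hx, hy] using congrArg φ hc
  · simp [hy]

/-- `R` need not be commutative, so `e` is right multiplication by the transposed (integral)
change-of-basis matrix. -/
theorem Module.Basis.exists_linearEquiv_pi_intCast {ι κ : Type*} [Fintype ι] [Fintype κ]
    [DecidableEq ι] [DecidableEq κ] (B : Basis ι ℤ (κ → ℤ)) (R : Type*) [Ring R] :
    ∃ e : (κ → R) ≃ₗ[R] (ι → R), ∀ (c : κ → ℤ) (x : R),
      e (fun j => c j • x) = fun i => B.repr c i • x := by
  have h₁ := B.toMatrix_mul_toMatrix_flip (Pi.basisFun ℤ κ)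
  have h₂ := (Pi.basisFun ℤ κ).toMatrix_mul_toMatrix_flip B
  let f := Int.castRingHom R
  refine ⟨Matrix.toLinearEquivRight'OfInv (M := ((Pi.basisFun ℤ κ).toMatrix B)ᵀ.map f)
    (M' := (B.toMatrix (Pi.basisFun ℤ κ))ᵀ.map f)
    (by rw [← Matrix.map_mul, ← Matrix.transpose_mul, h₁]; simp)
    (by rw [← Matrix.map_mul, ← Matrix.transpose_mul, h₂]; simp), fun c x => ?_⟩
  ext i
  have hc := congrFun (Basis.toMatrix_mulVec_repr (b := Pi.basisFun ℤ κ) (b' := B) c) i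
  simp only [zsmul_eq_mul, toLinearEquivRight'OfInv_apply, toLinearMapRight'_apply, vecMul,
    dotProduct, Matrix.map_apply, transpose_apply, eq_intCast, ← hc, mulVec, Pi.basisFun_repr,
    Finset.sum_smul, Int.cast_mul]
  refine Finset.sum_congr rfl fun j _ => ?_
  rw [mul_assoc, ← Int.cast_comm, ← mul_assoc, ← Int.cast_mul, ← Int.cast_mul, mul_comm]

section Quotient
variable {R M N : Type*} [Ring R] [AddCommGroup M] [Module R M] [AddCommGroup N] [Module R N]

noncomputable def LinearEquiv.quotientSpanSingleton (f : M ≃ₗ[R] N) {x : M} {y : N}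
    (h : f x = y) : (M ⧸ R ∙ x) ≃ₗ[R] (N ⧸ R ∙ y) :=
  Submodule.Quotient.equiv _ _ f (by simp [Submodule.map_span, h])

variable (N) in
noncomputable def quotientSpanInlEquiv (x : M) :
    ((M × N) ⧸ R ∙ (x, (0 : N))) ≃ₗ[R] (M ⧸ R ∙ x) × N :=
  let f := (R ∙ x).mkQ.prodMap (LinearMap.id : N →ₗ[R] N)
  (Submodule.quotEquivOfEq _ (LinearMap.ker f) (by
      ext ⟨m, n⟩
      simp [f, Submodule.mem_span_singleton, eq_comm (b := n)])).trans
    (f.quotKerEquivOfSurjective (Prod.map_surjective.2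
      ⟨Submodule.mkQ_surjective _, Function.surjective_id⟩))

theorem nonempty_quotientSpanIntSmul_equiv {n : ℕ} (a : Fin n → ℤ)
    (ha : Ideal.span (Set.range a) = ⊤) (x : R) :
    Nonempty (((Fin n → R) ⧸ R ∙ fun i => a i • x) ≃ₗ[R] (R ⧸ R ∙ x) × (Fin (n - 1) → R)) := by
  obtain ⟨u, hu⟩ := (Submodule.mem_span_range_iff_exists_fun ℤ).1 (ha ▸ Submodule.mem_top :
    (1 : ℤ) ∈ Ideal.span (Set.range a))
  obtain ⟨k, B, hB⟩ := exists_finBasis_zero_eq_of_apply_eq_one (φ := Fintype.linearCombination ℤ u)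
    (y := a) (by simpa [Fintype.linearCombination_apply, mul_comm] using hu)
  obtain rfl : k = n - 1 := by
    have := Module.finrank_eq_card_basis B
    rw [finrank_fin_fun, Fintype.card_fin] at this
    omega
  classical
  obtain ⟨e, he⟩ := B.exists_linearEquiv_pi_intCast R
  have hex : (e.trans (Fin.consLinearEquiv R fun _ => R).symm) (fun i => a i • x) = (x, 0) := by
    rw [LinearEquiv.trans_apply, he, ← hB, B.repr_self]
    ext i
    · simp
    · simp [Finsupp.single_apply, Fin.tail, (Fin.succ_ne_zero i).symm]
  exact ⟨(LinearEquiv.quotientSpanSingleton _ hex).trans (quotientSpanInlEquiv _ x)⟩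

end Quotient

section NormElement
variable (k G : Type*) [Semiring k] [Fintype G]

noncomputable def normElement : MonoidAlgebra k G := ∑ g : G, single g 1

variable {k G}

@[simp]
theorem coeff_normElement (g : G) : (normElement k G).coeff g = 1 := by
  classical
  simp [normElement, coeff_sum, Finsupp.single_apply]

variable [Group G]

theorem smul_normElement_injective : Function.Injective fun c : k => c • normElement k G :=
  fun c d h => by simpa using congrArg (fun x => x.coeff 1) h

theorem eq_coeff_one_smul_normElement {x : MonoidAlgebra k G}
    (hx : ∀ g : G, single g 1 * x = x) : x = x.coeff 1 • normElement k G := by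
  ext g
  simpa using (congrArg (fun y => y.coeff g) (hx g)).symm

theorem single_one_mul_normElement (g : G) :
    single g (1 : k) * normElement k G = normElement k G := by
  simp only [normElement, Finset.mul_sum, single_mul_single, one_mul]
  exact Fintype.sum_equiv (Equiv.mulLeft g) _ _ fun _ => rfl

end NormElement

section Augmentation
variable {G : Type*} [Group G]

@[simp]
theorem augmentation_single (g : G) (c : ℤ) : augmentation G (single g c) = c := by
  simp [augmentation]

theorem mul_normElement [Fintype G] (r : MonoidAlgebra ℤ G) :
    r * normElement ℤ G = augmentation G r • normElement ℤ G := by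
  induction r using MonoidAlgebra.induction_linear with
  | zero => simp
  | add x y hx hy => rw [add_mul, hx, hy, map_add, add_smul]
  | single g c =>
    rw [← mul_one c, ← smul_single', smul_mul_assoc, single_one_mul_normElement, map_zsmul,
      augmentation_single, smul_eq_mul, mul_one]

theorem single_sub_one_mem_augmentationIdeal (g : G) :
    single g 1 - 1 ∈ augmentationIdeal G := by
  simp [augmentationIdeal, RingHom.mem_ker]

theorem sum_coeff_smul_single_sub_one [Fintype G] (x : MonoidAlgebra ℤ G) :
    ∑ g : G, x.coeff g • (single g 1 - 1 : MonoidAlgebra ℤ G) = x - augmentation G x • 1 := by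
  classical
  induction x using MonoidAlgebra.induction_linear with
  | zero => simp
  | add x y hx hy =>
    simp only [coeff_add, Finsupp.add_apply, add_smul, Finset.sum_add_distrib, hx, hy, map_add]
    abel
  | single g c =>
    simp [Finsupp.single_apply, mul_sub, intCast_def]

end Augmentation

section Antipode
variable {G : Type*} [Group G]

@[simp]
theorem antipode_single (g : G) (c : ℤ) : antipode G (single g c) = .op (single g⁻¹ c) := by
  simp [antipode, ← MulOpposite.op_intCast, ← MulOpposite.op_mul, intCast_def, single_mul_single]

@[simp]
theorem unop_antipode_unop_antipode (w : MonoidAlgebra ℤ G) :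
    (antipode G (antipode G w).unop).unop = w := by
  induction w using MonoidAlgebra.induction_linear with
  | zero => simp
  | add x y hx hy => simp [hx, hy]
  | single g c => simp

theorem antipode_normElement [Fintype G] :
    antipode G (normElement ℤ G) = .op (normElement ℤ G) := by
  rw [normElement, map_sum]
  simp only [antipode_single]
  change _ = MulOpposite.opAddEquiv _
  rw [map_sum]
  exact Fintype.sum_equiv (Equiv.inv G) _ _ fun _ => rfl

end Antipode

/-- `H¹(G, k[G]) = 0`: the coefficient of the cocycle identity for `g` and `g⁻¹ * x` at `x` shows
that `w` with coefficients `w_t = -(y t)_t` is a coboundary witness. -/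
theorem exists_eq_single_mul_sub_of_cocycle {k G : Type*} [Ring k] [Group G] [Fintype G]
    (y : G → MonoidAlgebra k G) (hy : ∀ g h, y (g * h) = single g 1 * y h + y g) :
    ∃ w, ∀ g, y g = single g 1 * w - w := by
  classical
  set w := -∑ t, single t ((y t).coeff t)
  have hw (t : G) : w.coeff t = -(y t).coeff t := by simp [w, coeff_sum, Finsupp.single_apply]
  refine ⟨w, fun g => ?_⟩
  ext x
  have := congrArg (·.coeff x) (hy g (g⁻¹ * x))
  simp only [mul_inv_cancel_left, coeff_add, Finsupp.add_apply, coeff_single_mul_apply,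
    one_mul] at this
  rw [coeff_sub, Finsupp.sub_apply, coeff_single_mul_apply, one_mul, hw, hw, this]
  abel

section Dual
variable {G : Type*} [Group G]

noncomputable def toDualAugmentationIdeal :
    MonoidAlgebra ℤ G →ₗ[MonoidAlgebra ℤ G] ZGDual G (augmentationIdeal G) where
  toFun w := (augmentationIdeal G).subtype.smulRight (antipode G w).unop
  map_add' w w' := LinearMap.ext fun x => by
    change (x : MonoidAlgebra ℤ G) * (antipode G (w + w')).unop =
      x * (antipode G w).unop + x * (antipode G w').unop
    simp [mul_add]
  map_smul' r w := LinearMap.ext fun x => by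
    change (x : MonoidAlgebra ℤ G) * (antipode G (r * w)).unop =
      x * (antipode G w).unop * (antipode G r).unop
    simp [mul_assoc]

theorem toDualAugmentationIdeal_apply (w : MonoidAlgebra ℤ G) (x : augmentationIdeal G) :
    (show augmentationIdeal G →ₗ[MonoidAlgebra ℤ G] MonoidAlgebra ℤ G from
      toDualAugmentationIdeal w) x = x * (antipode G w).unop := rfl

variable [Fintype G]

theorem ker_toDualAugmentationIdeal :
    LinearMap.ker (toDualAugmentationIdeal (G := G)) =
      Submodule.span (MonoidAlgebra ℤ G) {normElement ℤ G} := by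
  ext w
  rw [LinearMap.mem_ker, Submodule.mem_span_singleton]
  constructor
  · intro hw
    have hinv : ∀ g : G, single g 1 * (antipode G w).unop = (antipode G w).unop := fun g => by
      have := LinearMap.congr_fun hw ⟨_, single_sub_one_mem_augmentationIdeal g⟩
      rw [toDualAugmentationIdeal_apply, sub_mul, one_mul] at this
      exact sub_eq_zero.1 this
    refine ⟨((antipode G w).unop.coeff 1 : MonoidAlgebra ℤ G), ?_⟩
    conv_rhs => rw [← unop_antipode_unop_antipode w, eq_coeff_one_smul_normElement hinv]
    simp [antipode_normElement, zsmul_eq_mul, Int.cast_comm]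
  · rintro ⟨r, rfl⟩
    refine LinearMap.ext fun x => ?_
    rw [toDualAugmentationIdeal_apply, smul_eq_mul, map_mul, antipode_normElement,
      MulOpposite.unop_mul, MulOpposite.unop_op, ← mul_assoc, mul_normElement]
    simp only [show augmentation G x = 0 from x.2, zero_smul, zero_mul]
    rfl

theorem exists_forall_apply_eq_mul
    (F : augmentationIdeal G →ₗ[MonoidAlgebra ℤ G] MonoidAlgebra ℤ G) :
    ∃ w, ∀ x, F x = x * w := by
  let e (g : G) : augmentationIdeal G := ⟨_, single_sub_one_mem_augmentationIdeal g⟩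
  obtain ⟨w, hw⟩ := exists_eq_single_mul_sub_of_cocycle (fun g => F (e g)) fun g h => by
    change F (e (g * h)) = single g (1 : ℤ) • F (e h) + F (e g)
    rw [← map_smul, ← map_add]
    congr 1
    ext
    simp [e, mul_sub, single_mul_single]
  refine ⟨w, fun x => ?_⟩
  have hx : x = ∑ g, (x : MonoidAlgebra ℤ G).coeff g • e g := Subtype.ext <| by
    simp only [Submodule.coe_sum, Submodule.coe_smul_of_tower, e, sum_coeff_smul_single_sub_one,
      show augmentation G x = 0 from x.2, zero_smul, sub_zero]
  calc F x = ∑ g, (x : MonoidAlgebra ℤ G).coeff g • (single g 1 * w - w) := by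
        conv_lhs => rw [hx]
        simp [hw]
    _ = x * w := by
        simp only [← sub_one_mul, ← smul_mul_assoc, ← Finset.sum_mul,
          sum_coeff_smul_single_sub_one, show augmentation G x = 0 from x.2, zero_smul, sub_zero]

theorem toDualAugmentationIdeal_surjective :
    Function.Surjective (toDualAugmentationIdeal (G := G)) := fun F => by
  obtain ⟨w, hw⟩ := exists_forall_apply_eq_mul F
  exact ⟨(antipode G w).unop, LinearMap.ext fun x => by
    rw [toDualAugmentationIdeal_apply, unop_antipode_unop_antipode, hw]⟩

noncomputable def quotientSpanNormElementEquivDual :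
    (MonoidAlgebra ℤ G ⧸ Submodule.span (MonoidAlgebra ℤ G) {normElement ℤ G})
      ≃ₗ[MonoidAlgebra ℤ G] ZGDual G (augmentationIdeal G) :=
  (Submodule.quotEquivOfEq _ _ ker_toDualAugmentationIdeal.symm).trans
    (toDualAugmentationIdeal.quotKerEquivOfSurjective toDualAugmentationIdeal_surjective)

end Dual

theorem span_range_eq_top_of_torsionFree {ι G : Type*} [Group G] [Fintype G] {a : ι → ℤ}
    (ha : a ≠ 0)
    (htf : ∀ x : (ι → MonoidAlgebra ℤ G) ⧸
        Submodule.span (MonoidAlgebra ℤ G) {fun i => a i • normElement ℤ G},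
      ∀ k : ℤ, k ≠ 0 → k • x = 0 → x = 0) :
    Ideal.span (Set.range a) = ⊤ := by
  refine Int.span_range_eq_top_of_primitive ha fun d hd b hab => ?_
  have hb : (fun i => b i • normElement ℤ G) ∈
      Submodule.span (MonoidAlgebra ℤ G) {fun i => a i • normElement ℤ G} := by
    rw [← Submodule.Quotient.mk_eq_zero]
    refine htf _ d hd ?_
    rw [← Submodule.Quotient.mk_smul, Submodule.Quotient.mk_eq_zero, hab]
    convert Submodule.mem_span_singleton_self _ using 1
    ext i
    simp [mul_smul]
  obtain ⟨r, hr⟩ := Submodule.mem_span_singleton.1 hb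
  refine ⟨augmentation G r, funext fun i => smul_normElement_injective (k := ℤ) (G := G) ?_⟩
  have := congrFun hr i
  simp only [Pi.smul_apply, smul_eq_mul, mul_smul_comm, mul_normElement, smul_smul] at this
  simp [← this, mul_comm]

/-- Let `G` be a finite group and `f : ℤ → ℤ[G]^n` an injective `ℤ[G]`-linear map from the
trivial module (such a map is determined by the `G`-invariant vector `v = f(1)`, with
`f(k) = k • v`), such that `coker f` is torsion-free as an abelian group. Then
`coker f ≅ I* ⊕ ℤ[G]^{n-1}` where `I* = Hom_{ℤ[G]}(I, ℤ[G])` is the dual of the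
augmentation ideal. -/
theorem stmt_7 (G : Type*) [Group G] [Finite G] (n : ℕ)
    (v : Fin n → MonoidAlgebra ℤ G)
    (hinv : ∀ g : G, (MonoidAlgebra.of ℤ G g) • v = v)
    (hinj : Function.Injective fun k : ℤ => k • v)
    (htf : ∀ x : (Fin n → MonoidAlgebra ℤ G) ⧸
        Submodule.span (MonoidAlgebra ℤ G) {v},
      ∀ k : ℤ, k ≠ 0 → k • x = 0 → x = 0) :
    Nonempty (((Fin n → MonoidAlgebra ℤ G) ⧸
        Submodule.span (MonoidAlgebra ℤ G) {v})
      ≃ₗ[MonoidAlgebra ℤ G]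
        ZGDual G (augmentationIdeal G) × (Fin (n - 1) → MonoidAlgebra ℤ G)) := by
  have := Fintype.ofFinite G
  obtain ⟨a, rfl⟩ : ∃ a : Fin n → ℤ, v = fun i => a i • normElement ℤ G :=
    ⟨fun i => (v i).coeff 1, funext fun i =>
      eq_coeff_one_smul_normElement fun g => by simpa using congrFun (hinv g) i⟩
  have ha : a ≠ 0 := by
    rintro rfl
    exact one_ne_zero (hinj (by ext; simp) : (1 : ℤ) = 0)
  obtain ⟨e⟩ := nonempty_quotientSpanIntSmul_equiv a (span_range_eq_top_of_torsionFree ha htf)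
    (normElement ℤ G)
  exact ⟨e.trans (quotientSpanNormElementEquivDual.prodCongr (.refl _ _))⟩
end

section
/- If G is a finite group and J is a finitely generated Z[G]-module whose underlying abelian group is torsion-free (a Z[G]-lattice), then Ext^1_{Z[G]}(J, Z[G]) = 0. -/
/-!
For finite `G`, taking the coefficient at `1` identifies `Hom_{k[G]}(M, k[G])` with
`Hom_k(M, k)`. Hence a `k[G]`-linear map into `k[G]` extends along any `k[G]`-linear map that
is split injective over `k`. A `ℤ[G]`-lattice `J` is free over `ℤ`, so in a projective resolution
`P₁ → P₀ → J → 0` the kernel of `P₀ → J` is a `ℤ`-direct summand of `P₀`. A 1-cocycle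
`P₁ → ℤ[G]` factors through this kernel, so it extends to `P₀`, i.e. it is a coboundary.
-/

open CategoryTheory Limits

theorem LinearMap.exists_comp_eq_of_surjective_of_ker_le {R M N P : Type*} [Ring R]
    [AddCommGroup M] [AddCommGroup N] [AddCommGroup P] [Module R M] [Module R N] [Module R P]
    (p : M →ₗ[R] N) (hp : Function.Surjective p) (f : M →ₗ[R] P) (h : ker p ≤ ker f) :
    ∃ g : N →ₗ[R] P, g ∘ₗ p = f :=
  ⟨(ker p).liftQ f h ∘ₗ (p.quotKerEquivOfSurjective hp).symm.toLinearMap, by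
    ext x
    simp⟩

theorem CategoryTheory.ProjectiveResolution.subsingleton_ext_one_of_forall_exists_comp_eq
    {R : Type*} [Ring R] {C : Type*} [Category C] [Abelian C] [Linear R C] [EnoughProjectives C]
    {X Y : C} (P : ProjectiveResolution X)
    (h : ∀ f : P.complex.X 1 ⟶ Y, P.complex.d 2 1 ≫ f = 0 →
      ∃ g : P.complex.X 0 ⟶ Y, P.complex.d 1 0 ≫ g = f) :
    Subsingleton (((Ext R C 1).obj (Opposite.op X)).obj Y) := by
  rw [← ModuleCat.isZero_iff_subsingleton]
  refine IsZero.of_iso ?_ (P.isoExt 1 Y)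
  rw [← HomologicalComplex.exactAt_iff_isZero_homology,
    HomologicalComplex.exactAt_iff' _ 0 1 2 (by simp) (by simp), ShortComplex.moduleCat_exact_iff]
  exact h

namespace MonoidAlgebra

theorem sum_single_coeff {k G : Type*} [Semiring k] [Fintype G] (x : k[G]) :
    ∑ g : G, single g (x.coeff g) = x := by
  ext g
  simp [coeff_sum]

noncomputable def coeffOne (k G : Type*) [Semiring k] [One G] : k[G] →ₗ[k] k :=
  Finsupp.lapply 1 ∘ₗ (coeffLinearEquiv k).toLinearMap

variable {k G M N : Type*} [CommRing k] [Group G] [Fintype G]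
  [AddCommGroup M] [Module k M] [Module k[G] M] [IsScalarTower k k[G] M]
  [AddCommGroup N] [Module k N] [Module k[G] N] [IsScalarTower k k[G] N]

/-- The inverse of `ψ ↦ coeffOne k G ∘ₗ ψ`: for finite `G`, `k[G]` is also the module coinduced
from `k`, and this is Frobenius reciprocity for it. -/
noncomputable def liftFunctional (φ : M →ₗ[k] k) : M →ₗ[k[G]] k[G] :=
  equivariantOfLinearOfComm
    (∑ g : G, lsingle g ∘ₗ φ ∘ₗ GroupSMul.linearMap k M g⁻¹)
    (by
      intro g v
      simp only [LinearMap.sum_apply, LinearMap.comp_apply, GroupSMul.linearMap_apply,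
        lsingle_apply, smul_smul, single_mul_single, one_mul, smul_eq_mul, Finset.mul_sum]
      exact Fintype.sum_equiv (Equiv.mulLeft g⁻¹) _ _ fun b => by simp)

theorem liftFunctional_apply (φ : M →ₗ[k] k) (v : M) :
    liftFunctional (G := G) φ v = ∑ g : G, single g (φ (single g⁻¹ (1 : k) • v)) := by
  simp [liftFunctional]

theorem liftFunctional_comp (φ : M →ₗ[k] k) (i : N →ₗ[k[G]] M) :
    liftFunctional φ ∘ₗ i = liftFunctional (φ ∘ₗ i.restrictScalars k) := by
  ext v
  simp [liftFunctional_apply]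

theorem liftFunctional_coeffOne_comp (ψ : M →ₗ[k[G]] k[G]) :
    liftFunctional (coeffOne k G ∘ₗ ψ.restrictScalars k) = ψ := by
  ext v
  simp [liftFunctional_apply, coeffOne, sum_single_coeff]

theorem exists_comp_eq_of_retraction (i : N →ₗ[k[G]] M) (r : M →ₗ[k] N)
    (hr : r ∘ₗ i.restrictScalars k = .id) (g : N →ₗ[k[G]] k[G]) :
    ∃ h : M →ₗ[k[G]] k[G], h ∘ₗ i = g :=
  ⟨liftFunctional (coeffOne k G ∘ₗ g.restrictScalars k ∘ₗ r), by
    rw [liftFunctional_comp, LinearMap.comp_assoc, LinearMap.comp_assoc, hr, LinearMap.comp_id,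
      liftFunctional_coeffOne_comp]⟩

theorem exists_comp_eq_of_exact {P₁ P₀ X : Type*} [AddCommGroup P₁] [Module k[G] P₁]
    [AddCommGroup P₀] [Module k P₀] [Module k[G] P₀] [IsScalarTower k k[G] P₀]
    [AddCommGroup X] [Module k X] [Module k[G] X] [IsScalarTower k k[G] X] [Module.Projective k X]
    (d : P₁ →ₗ[k[G]] P₀) (π : P₀ →ₗ[k[G]] X) (hdπ : Function.Exact d π)
    (hπ : Function.Surjective π) (f : P₁ →ₗ[k[G]] k[G]) (hf : LinearMap.ker d ≤ LinearMap.ker f) :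
    ∃ h : P₀ →ₗ[k[G]] k[G], h ∘ₗ d = f := by
  let K := LinearMap.ker π
  let d' : P₁ →ₗ[k[G]] K := d.codRestrict K hdπ.apply_apply_eq_zero
  have hd' : Function.Surjective d' := fun ⟨y, hy⟩ =>
    let ⟨x, hx⟩ := (hdπ y).mp hy
    ⟨x, Subtype.ext hx⟩
  obtain ⟨g, rfl⟩ := LinearMap.exists_comp_eq_of_surjective_of_ker_le d' hd' f
    ((LinearMap.ker_codRestrict K d _).le.trans hf)
  obtain ⟨s, hs⟩ := Module.projective_lifting_property (π.restrictScalars k) .id hπ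
  have hK : Function.Exact (K.subtype.restrictScalars k) (π.restrictScalars k) :=
    LinearMap.exact_subtype_ker_map π
  have hsplit := (Function.Exact.split_tfae hK K.injective_subtype hπ).out 0 1
  obtain ⟨r, hr⟩ := hsplit.mp ⟨s, hs⟩
  obtain ⟨h, rfl⟩ := exists_comp_eq_of_retraction K.subtype r hr g
  exact ⟨h, rfl⟩

end MonoidAlgebra

/-- If `G` is a finite group and `J` is a finitely generated `ℤ[G]`-module whose underlying
abelian group is torsion-free (a `ℤ[G]`-lattice), then `Ext¹_{ℤ[G]}(J, ℤ[G]) = 0`. -/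
theorem stmt_8 (G : Type) [Group G] [Finite G]
    (J : Type) [AddCommGroup J] [Module (MonoidAlgebra ℤ G) J]
    [Module.Finite (MonoidAlgebra ℤ G) J] [NoZeroSMulDivisors ℤ J] :
    Subsingleton ((((Ext ℤ (ModuleCat (MonoidAlgebra ℤ G)) 1).obj
        (Opposite.op (ModuleCat.of (MonoidAlgebra ℤ G) J))).obj
        (ModuleCat.of (MonoidAlgebra ℤ G) (MonoidAlgebra ℤ G)))) := by
  have : Fintype G := Fintype.ofFinite G
  have : Module.Finite ℤ J := Module.Finite.trans (MonoidAlgebra ℤ G) J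
  let P := ProjectiveResolution.of (ModuleCat.of (MonoidAlgebra ℤ G) J)
  have : Module.Projective ℤ (((ChainComplex.single₀ _).obj
      (ModuleCat.of (MonoidAlgebra ℤ G) J)).X 0) := (inferInstance : Module.Projective ℤ J)
  refine P.subsingleton_ext_one_of_forall_exists_comp_eq fun f hf => ?_
  have hker : LinearMap.ker (P.complex.d 1 0).hom ≤ LinearMap.ker f.hom := by
    rw [← (P.exact_succ 0).moduleCat_range_eq_ker]
    rintro _ ⟨y, rfl⟩
    exact congr($hf y)
  obtain ⟨h, hh⟩ := MonoidAlgebra.exists_comp_eq_of_exact (P.complex.d 1 0).hom (P.π.f 0).hom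
    ((ShortComplex.ShortExact.moduleCat_exact_iff_function_exact _).mp P.exact₀)
    ((ModuleCat.epi_iff_surjective _).mp inferInstance) f.hom hker
  exact ⟨ModuleCat.ofHom h, ModuleCat.hom_ext hh⟩
end

section
/- Let G be a finite group and P a finitely generated projective Z[G]-module such that P ⊗_Z Q ≅ Q[G] as Q[G]-modules. Then there exists a surjective Z[G]-module homomorphism φ: P → Z onto the trivial module Z. -/
open TensorProduct

/-- The trivial `ℤ[G]`-module `ℤ` (every `g ∈ G` acts as the identity). -/
def TrivialMod (G : Type*) [Group G] : Type := ℤ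

instance (G : Type*) [Group G] : AddCommGroup (TrivialMod G) :=
  inferInstanceAs (AddCommGroup ℤ)

noncomputable instance (G : Type*) [Group G] :
    Module (MonoidAlgebra ℤ G) (TrivialMod G) :=
  Module.compHom ℤ (augmentation G).toRingHom

/-!
Composing `1 ⊗ - : P → ℚ ⊗ P` with `e` and the augmentation of `ℚ[G]` gives a `G`-invariant
additive map `ψ : P → ℚ`, nonzero because `ℚ ⊗ P` is spanned over `ℚ` by the `1 ⊗ x`. Its
image is a nonzero finitely generated subgroup of `ℚ`, hence equal to `ℤ a` for some `a ≠ 0`,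
so `ψ / a` is a surjective `G`-invariant map `P → ℤ`, that is, a surjection onto the trivial
module.
-/

section PrincipalIdealDomain

variable {R K M : Type*} [CommRing R] [IsDomain R] [IsPrincipalIdealRing R] [Field K]
  [Algebra R K] [IsFractionRing R K] [AddCommGroup M] [Module R M] [Module.Finite R M]

theorem LinearMap.exists_surjective_smul_eq_of_ne_zero (ψ : M →ₗ[R] K) (hψ : ψ ≠ 0) :
    ∃ a : K, a ≠ 0 ∧ ∃ φ : M →ₗ[R] R, Function.Surjective φ ∧ ∀ x, φ x • a = ψ x := by
  have hfg : (LinearMap.range ψ).FG := by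
    rw [LinearMap.range_eq_map]
    exact Module.Finite.fg_top.map ψ
  have : (LinearMap.range ψ).IsPrincipal :=
    FractionalIdeal.isPrincipal ⟨_, FractionalIdeal.isFractional_of_fg hfg⟩
  obtain ⟨a, ha⟩ := Submodule.IsPrincipal.principal (LinearMap.range ψ)
  have ha0 : a ≠ 0 := by
    rintro rfl
    rw [Submodule.span_singleton_eq_bot.mpr rfl, LinearMap.range_eq_bot] at ha
    exact hψ ha
  let spanEquiv :=
    (LinearEquiv.ofEq _ _ ha).trans (LinearEquiv.toSpanNonzeroSingleton R K a ha0).symm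
  refine ⟨a, ha0, spanEquiv.toLinearMap ∘ₗ ψ.rangeRestrict, ?_, fun x => ?_⟩
  · exact spanEquiv.surjective.comp ψ.surjective_rangeRestrict
  · exact LinearEquiv.toSpanNonzeroSingleton_symm_apply_smul R K a ha0 _

end PrincipalIdealDomain

section GroupRing

variable {G : Type*} [Group G] {P : Type*} [AddCommGroup P]

theorem augmentation_of (g : G) : augmentation G (MonoidAlgebra.of ℤ G g) = 1 :=
  MonoidAlgebra.lift_of _ g

noncomputable def rationalAugmentation (e : (ℚ ⊗[ℤ] P) ≃ₗ[ℚ] MonoidAlgebra ℚ G) : P →ₗ[ℤ] ℚ :=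
  ((MonoidAlgebra.lift ℚ ℚ G 1).toLinearMap ∘ₗ e.toLinearMap).restrictScalars ℤ ∘ₗ
    TensorProduct.mk ℤ ℚ P 1

theorem rationalAugmentation_ne_zero (e : (ℚ ⊗[ℤ] P) ≃ₗ[ℚ] MonoidAlgebra ℚ G) :
    rationalAugmentation e ≠ 0 := by
  intro h
  have hzero : (MonoidAlgebra.lift ℚ ℚ G 1).toLinearMap ∘ₗ e.toLinearMap = 0 :=
    (TensorProduct.isBaseChange ℤ P ℚ).algHom_ext _ _ fun x => LinearMap.congr_fun h x
  have hone := LinearMap.congr_fun hzero (e.symm 1)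
  simp at hone

variable [Module (MonoidAlgebra ℤ G) P]

theorem rationalAugmentation_of_smul {e : (ℚ ⊗[ℤ] P) ≃ₗ[ℚ] MonoidAlgebra ℚ G}
    (he : ∀ (g : G) (q : ℚ) (x : P),
      e (q ⊗ₜ (MonoidAlgebra.of ℤ G g • x)) = MonoidAlgebra.of ℚ G g * e (q ⊗ₜ x))
    (g : G) (x : P) :
    rationalAugmentation e (MonoidAlgebra.of ℤ G g • x) = rationalAugmentation e x := by
  change MonoidAlgebra.lift ℚ ℚ G 1 (e (1 ⊗ₜ (MonoidAlgebra.of ℤ G g • x))) =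
    MonoidAlgebra.lift ℚ ℚ G 1 (e (1 ⊗ₜ x))
  rw [he, map_mul, MonoidAlgebra.lift_of, MonoidHom.one_apply, one_mul]

noncomputable def LinearMap.toTrivialMod (φ : P →ₗ[ℤ] ℤ)
    (hφ : ∀ (g : G) (x : P), φ (MonoidAlgebra.of ℤ G g • x) = φ x) :
    P →ₗ[MonoidAlgebra ℤ G] TrivialMod G where
  toFun := φ
  map_add' := φ.map_add
  map_smul' r x := by
    change φ (r • x) = augmentation G r * φ x
    induction r using MonoidAlgebra.induction_on generalizing x with
    | of g => rw [hφ, augmentation_of, one_mul]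
    | add s t hs ht => rw [add_smul, map_add, map_add, hs, ht, add_mul]
    | smul c s hs => rw [smul_assoc, map_smul, hs, map_smul, smul_mul_assoc]

end GroupRing

theorem stmt_9_general (G : Type*) [Group G] [Finite G]
    (P : Type*) [AddCommGroup P] [Module (MonoidAlgebra ℤ G) P]
    [Module.Finite (MonoidAlgebra ℤ G) P]
    (e : (ℚ ⊗[ℤ] P) ≃ₗ[ℚ] MonoidAlgebra ℚ G)
    (he : ∀ (g : G) (q : ℚ) (x : P),
      e (q ⊗ₜ (MonoidAlgebra.of ℤ G g • x)) = MonoidAlgebra.of ℚ G g * e (q ⊗ₜ x)) :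
    ∃ φ : P →ₗ[MonoidAlgebra ℤ G] TrivialMod G, Function.Surjective φ := by
  have : Module.Finite ℤ P := Module.Finite.trans (MonoidAlgebra ℤ G) P
  obtain ⟨a, ha, φ, hφ_surj, hφ⟩ :=
    (rationalAugmentation e).exists_surjective_smul_eq_of_ne_zero (rationalAugmentation_ne_zero e)
  have hφ_inv (g : G) (x : P) : φ (MonoidAlgebra.of ℤ G g • x) = φ x :=
    smul_left_injective ℤ ha <| by simp only [hφ, rationalAugmentation_of_smul he]
  exact ⟨φ.toTrivialMod hφ_inv, hφ_surj⟩

/-- Let `G` be a finite group and `P` a finitely generated projective `ℤ[G]`-module such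
that `P ⊗_ℤ ℚ ≅ ℚ[G]` as `ℚ[G]`-modules (expressed as a `ℚ`-linear, `G`-equivariant
isomorphism `ℚ ⊗[ℤ] P ≃ ℚ[G]`). Then there is a surjective `ℤ[G]`-linear map from `P`
onto the trivial module `ℤ`. -/
theorem stmt_9 (G : Type*) [Group G] [Finite G]
    (P : Type*) [AddCommGroup P] [Module (MonoidAlgebra ℤ G) P]
    [Module.Finite (MonoidAlgebra ℤ G) P] [Module.Projective (MonoidAlgebra ℤ G) P]
    (e : (ℚ ⊗[ℤ] P) ≃ₗ[ℚ] MonoidAlgebra ℚ G)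
    (he : ∀ (g : G) (q : ℚ) (x : P),
      e (q ⊗ₜ (MonoidAlgebra.of ℤ G g • x)) = MonoidAlgebra.of ℚ G g * e (q ⊗ₜ x)) :
    ∃ φ : P →ₗ[MonoidAlgebra ℤ G] TrivialMod G, Function.Surjective φ :=
  stmt_9_general G P e he
end

section
/- Let G be a finite group, I the augmentation ideal of Z[G], and P a finitely generated projective Z[G]-module of rank 1 with P ⊗_Z Q ≅ Q[G]. Then there exists a Z[G]-lattice J such that I ⊕ P ≅ J ⊕ Z[G], and consequently the Z-rank of J equals |G| - 1. -/
/-!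
Composing `e` with the rational augmentation gives a functional `φ : P → ℚ` with
`φ (r • p) = ε(r) φ(p)`. Its image is a nonzero finitely generated subgroup of `ℚ`, hence cyclic,
so rescaling `φ` gives a surjection `g : P → ℤ` with the same equivariance. Read as a
`ℤ[G]`-linear surjection `P → ℤ[G] ⧸ I`, it is a second projective presentation of the trivial
module besides `ℤ[G] → ℤ[G] ⧸ I`, and Schanuel's lemma gives `I × P ≅ ker g × ℤ[G]`.
Finally `rank ker g = rank P - 1 = dim_ℚ ℚ[G] - 1`.
-/

open TensorProduct

namespace LinearMap

variable {R : Type*} [Ring R] {M N P P' : Type*} [AddCommGroup M] [Module R M]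
  [AddCommGroup N] [Module R N] [AddCommGroup P] [Module R P] [AddCommGroup P'] [Module R P']

theorem nonempty_equiv_ker_prod_of_surjective [Module.Projective R M] (π : N →ₗ[R] M)
    (hπ : Function.Surjective π) : Nonempty (N ≃ₗ[R] ker π × M) :=
  let ⟨s, hs⟩ := π.exists_rightInverse_of_surjective (range_eq_top.mpr hπ)
  ⟨((exact_subtype_ker_map π).splitSurjectiveEquiv (ker π).injective_subtype ⟨s, hs⟩).1⟩

def pullback (f : P →ₗ[R] M) (f' : P' →ₗ[R] M) : Submodule R (P × P') :=
  eqLocus (f ∘ₗ fst R P P') (f' ∘ₗ snd R P P')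

variable (f : P →ₗ[R] M) (f' : P' →ₗ[R] M)

def pullbackComm : pullback f f' ≃ₗ[R] pullback f' f where
  toFun x := ⟨x.1.swap, x.2.symm⟩
  invFun x := ⟨x.1.swap, x.2.symm⟩
  map_add' _ _ := rfl
  map_smul' _ _ := rfl
  left_inv _ := rfl
  right_inv _ := rfl

def kerPullbackSndEquiv : ker (snd R P P' ∘ₗ (pullback f f').subtype) ≃ₗ[R] ker f where
  toFun x := ⟨x.1.1.1, by
    have hx : f x.1.1.1 = f' x.1.1.2 := x.1.2
    have hx₂ : x.1.1.2 = 0 := x.2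
    rw [mem_ker, hx, hx₂, map_zero]⟩
  invFun x := ⟨⟨(x.1, 0), show f x.1 = f' 0 by rw [map_zero]; exact x.2⟩, rfl⟩
  map_add' _ _ := rfl
  map_smul' _ _ := rfl
  left_inv x := by
    have hx₂ : x.1.1.2 = 0 := x.2
    ext <;> simp [hx₂]
  right_inv _ := rfl

theorem nonempty_pullback_equiv_ker_prod [Module.Projective R P'] (hf : Function.Surjective f) :
    Nonempty (pullback f f' ≃ₗ[R] ker f × P') := by
  have hsnd : Function.Surjective (snd R P P' ∘ₗ (pullback f f').subtype) := fun p' ↦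
    let ⟨p, hp⟩ := hf (f' p')
    ⟨⟨(p, p'), hp⟩, rfl⟩
  obtain ⟨e⟩ := nonempty_equiv_ker_prod_of_surjective _ hsnd
  exact ⟨e.trans ((kerPullbackSndEquiv f f').prodCongr (.refl R P'))⟩

theorem schanuel [Module.Projective R P] [Module.Projective R P'] (hf : Function.Surjective f)
    (hf' : Function.Surjective f') : Nonempty ((ker f × P') ≃ₗ[R] (ker f' × P)) := by
  obtain ⟨e⟩ := nonempty_pullback_equiv_ker_prod f f' hf
  obtain ⟨e'⟩ := nonempty_pullback_equiv_ker_prod f' f hf'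
  exact ⟨e.symm.trans ((pullbackComm f f').trans e')⟩

end LinearMap

theorem Module.Projective.isTorsionFree_int {S P : Type*} [Ring S] [Module.IsTorsionFree ℤ S]
    [AddCommGroup P] [Module S P] [Module.Projective S P] : Module.IsTorsionFree ℤ P :=
  let ⟨s, hs⟩ := Module.projective_def.mp ‹Module.Projective S P›
  hs.injective.moduleIsTorsionFree s fun n p ↦ map_zsmul s n p

namespace LinearMap

variable {P : Type*} [AddCommGroup P] [Module.Finite ℤ P]

theorem exists_surjective_int_mul_eq (φ : P →ₗ[ℤ] ℚ) (hφ : φ ≠ 0) :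
    ∃ (g : P →ₗ[ℤ] ℤ) (c : ℚ), c ≠ 0 ∧ Function.Surjective g ∧ ∀ p, φ p = g p * c := by
  have hfg : (range φ).FG := by
    rw [range_eq_map]
    exact (Module.finite_def.mp inferInstance).map _
  obtain ⟨c, hc⟩ := (FractionalIdeal.isPrincipal
    (⟨_, FractionalIdeal.isFractional_of_fg hfg⟩ : FractionalIdeal (nonZeroDivisors ℤ) ℚ)).principal
  change range φ = Submodule.span ℤ {c} at hc
  have hc0 : c ≠ 0 := by
    rintro rfl
    exact hφ (range_eq_bot.mp (by simpa using hc))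
  let g : P →ₗ[ℤ] ℤ := (LinearEquiv.toSpanNonzeroSingleton ℤ ℚ c hc0).symm.toLinearMap ∘ₗ
    (LinearEquiv.ofEq _ _ hc).toLinearMap ∘ₗ φ.rangeRestrict
  refine ⟨g, c, hc0, by simpa [g] using φ.surjective_rangeRestrict, fun p ↦ ?_⟩
  have hgp := (LinearEquiv.toSpanNonzeroSingleton ℤ ℚ c hc0).apply_symm_apply
    (LinearEquiv.ofEq _ _ hc (φ.rangeRestrict p))
  rw [Subtype.ext_iff, LinearEquiv.toSpanNonzeroSingleton_apply] at hgp
  rw [← zsmul_eq_mul]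
  exact hgp.symm

theorem finrank_ker_add_one_of_surjective {g : P →ₗ[ℤ] ℤ} (hg : Function.Surjective g) :
    Module.finrank ℤ (ker g) + 1 = Module.finrank ℤ P := by
  rw [← (ker g).finrank_quotient_add_finrank, (g.quotKerEquivOfSurjective hg).finrank_eq,
    Module.finrank_self, add_comm]

end LinearMap

section AugmentationQuotient

variable {G : Type*} [Group G] {P : Type*} [AddCommGroup P] [Module (MonoidAlgebra ℤ G) P]

@[simp]
theorem mem_augmentationIdeal {r : MonoidAlgebra ℤ G} :
    r ∈ augmentationIdeal G ↔ augmentation G r = 0 :=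
  RingHom.mem_ker

noncomputable def toAugmentationQuotient (g : P →ₗ[ℤ] ℤ)
    (hg : ∀ r p, g (r • p) = augmentation G r * g p) :
    P →ₗ[MonoidAlgebra ℤ G] MonoidAlgebra ℤ G ⧸ augmentationIdeal G where
  toFun p := Submodule.Quotient.mk (algebraMap ℤ _ (g p))
  map_add' p q := by simp
  map_smul' r p := by
    rw [RingHom.id_apply, ← Submodule.Quotient.mk_smul, Submodule.Quotient.eq, hg]
    simp

variable {g : P →ₗ[ℤ] ℤ} (hg : ∀ r p, g (r • p) = augmentation G r * g p)

theorem toAugmentationQuotient_surjective (hg_surj : Function.Surjective g) :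
    Function.Surjective (toAugmentationQuotient g hg) := by
  rintro ⟨r⟩
  obtain ⟨p, hp⟩ := hg_surj (augmentation G r)
  refine ⟨p, (Submodule.Quotient.eq _).mpr ?_⟩
  simp [hp]

theorem finrank_ker_toAugmentationQuotient [Module.Finite ℤ P] (hg_surj : Function.Surjective g) :
    Module.finrank ℤ (LinearMap.ker (toAugmentationQuotient g hg)) + 1 = Module.finrank ℤ P := by
  have hker : (LinearMap.ker (toAugmentationQuotient g hg)).restrictScalars ℤ = LinearMap.ker g := by
    ext p
    simp [toAugmentationQuotient]
  rw [← LinearMap.finrank_ker_add_one_of_surjective hg_surj, ← hker]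
  rfl

end AugmentationQuotient

section RationalForm

variable {G : Type*} [Group G] {P : Type*} [AddCommGroup P]

noncomputable def augmentationFunctional (e : (ℚ ⊗[ℤ] P) ≃ₗ[ℚ] MonoidAlgebra ℚ G) :
    P →ₗ[ℤ] ℚ :=
  ((MonoidAlgebra.lift ℚ ℚ G 1).toLinearMap ∘ₗ e.toLinearMap).restrictScalars ℤ ∘ₗ
    TensorProduct.mk ℤ ℚ P 1

variable (e : (ℚ ⊗[ℤ] P) ≃ₗ[ℚ] MonoidAlgebra ℚ G)

theorem augmentationFunctional_apply (p : P) :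
    augmentationFunctional e p = MonoidAlgebra.lift ℚ ℚ G 1 (e (1 ⊗ₜ p)) :=
  rfl

theorem augmentationFunctional_ne_zero : augmentationFunctional e ≠ 0 := by
  intro h
  have hzero : ∀ x : ℚ ⊗[ℤ] P, MonoidAlgebra.lift ℚ ℚ G 1 (e x) = 0 := by
    intro x
    induction x using TensorProduct.induction_on with
    | zero => simp
    | tmul q p =>
      rw [← mul_one q, ← smul_eq_mul, ← smul_tmul', map_smul, map_smul]
      simp [← augmentationFunctional_apply, h]
    | add x y hx hy => simp [hx, hy]
  simpa using hzero (e.symm 1)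

variable [Module (MonoidAlgebra ℤ G) P]
  (he : ∀ (g : G) (q : ℚ) (x : P),
    e (q ⊗ₜ (MonoidAlgebra.of ℤ G g • x)) = MonoidAlgebra.of ℚ G g * e (q ⊗ₜ x))
include he

theorem augmentationFunctional_smul (r : MonoidAlgebra ℤ G) (p : P) :
    augmentationFunctional e (r • p) = augmentation G r * augmentationFunctional e p := by
  induction r using MonoidAlgebra.induction_on with
  | of g =>
    rw [augmentationFunctional_apply, he, map_mul]
    simp [augmentationFunctional_apply, augmentation]
  | add r s hr hs => simp [add_smul, hr, hs, add_mul]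
  | smul n r hr =>
    rw [smul_assoc, map_zsmul, hr, map_zsmul]
    simp [mul_assoc]

theorem exists_surjective_augmentation_equivariant [Module.Finite ℤ P] :
    ∃ g : P →ₗ[ℤ] ℤ, Function.Surjective g ∧ ∀ r p, g (r • p) = augmentation G r * g p := by
  obtain ⟨g, c, hc, hg_surj, hφ⟩ :=
    (augmentationFunctional e).exists_surjective_int_mul_eq (augmentationFunctional_ne_zero e)
  refine ⟨g, hg_surj, fun r p ↦ ?_⟩
  have h := augmentationFunctional_smul e he r p
  rw [hφ, hφ, ← mul_assoc] at h
  exact_mod_cast mul_right_cancel₀ hc h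

end RationalForm

/-- Let `G` be a finite group, `I` the augmentation ideal of `ℤ[G]`, and `P` a finitely
generated projective `ℤ[G]`-module of rank 1, i.e. with `P ⊗_ℤ ℚ ≅ ℚ[G]` as `ℚ[G]`-modules
(expressed as a `ℚ`-linear `G`-equivariant isomorphism). Then there is a `ℤ[G]`-lattice `J`
with `I ⊕ P ≅ J ⊕ ℤ[G]`, and consequently the `ℤ`-rank of `J` is `|G| - 1`. -/
theorem stmt_10 (G : Type*) [Group G] [Finite G]
    (P : Type*) [AddCommGroup P] [Module (MonoidAlgebra ℤ G) P]
    [Module.Finite (MonoidAlgebra ℤ G) P] [Module.Projective (MonoidAlgebra ℤ G) P]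
    (e : (ℚ ⊗[ℤ] P) ≃ₗ[ℚ] MonoidAlgebra ℚ G)
    (he : ∀ (g : G) (q : ℚ) (x : P),
      e (q ⊗ₜ (MonoidAlgebra.of ℤ G g • x)) = MonoidAlgebra.of ℚ G g * e (q ⊗ₜ x)) :
    ∃ J : Submodule (MonoidAlgebra ℤ G) P,
      NoZeroSMulDivisors ℤ J ∧
      Nonempty ((augmentationIdeal G × P) ≃ₗ[MonoidAlgebra ℤ G]
        (J × MonoidAlgebra ℤ G)) ∧
      Module.finrank ℤ J = Nat.card G - 1 := by
  have : Module.Finite ℤ P := .trans (MonoidAlgebra ℤ G) P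
  have : Module.IsTorsionFree ℤ P := Module.Projective.isTorsionFree_int (S := MonoidAlgebra ℤ G)
  obtain ⟨g, hg_surj, hg⟩ := exists_surjective_augmentation_equivariant e he
  obtain ⟨eqv⟩ := LinearMap.schanuel (augmentationIdeal G).mkQ (toAugmentationQuotient g hg)
    (Submodule.mkQ_surjective _) (toAugmentationQuotient_surjective hg hg_surj)
  -- `finrank_baseChange` needs `P` free, which holds as `P` is finitely generated and torsion-free.
  have hrank : Module.finrank ℤ P = Nat.card G := by
    rw [← Module.finrank_baseChange (R := ℚ), e.finrank_eq,
      Module.finrank_eq_nat_card_basis (MonoidAlgebra.basis G ℚ)]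
  refine ⟨LinearMap.ker (toAugmentationQuotient g hg), ⟨smul_eq_zero.mp⟩,
    ⟨((LinearEquiv.ofEq _ _ (Submodule.ker_mkQ _)).symm.prodCongr (.refl _ _)).trans eqv⟩, ?_⟩
  have hker := finrank_ker_toAugmentationQuotient hg hg_surj
  omega
end
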